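/- arXiv:math/0512613 — 5 statements merged into one kernel-verified Lean document; each statement's English description precedes it below -/
import Mathlib

section
/- Let G be a simple graph on a finite vertex type V and let s ⊊ t ⊆ E(G). Then the pair (-b0(s), b1(s)) is strictly smaller than (-b0(t), b1(t)) in the lexicographic order on ℤ × ℤ; that is, either b0(t) < b0(s), or b0(t) = b0(s) and b1(s) < b1(t). -/
open MvPolynomial

section Aux

open SimpleGraph

variable {V : Type*}

private lemma reach_aux (A : Set (Sym2 V)) (u v : V) {a b : V}
    (p : (fromEdgeSet (insert s(u,v) A)).Walk a b) :
    (fromEdgeSet A).Reachable a b ∨ (fromEdgeSet A).Reachable a u ∨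
      (fromEdgeSet A).Reachable a v := by
  induction p with
  | nil => exact Or.inl (Reachable.refl _)
  | @cons a c b h p ih =>
    rw [fromEdgeSet_adj _, Set.mem_insert_iff] at h
    obtain ⟨he | he, hne⟩ := h
    · rw [Sym2.eq_iff] at he
      rcases he with ⟨rfl, rfl⟩ | ⟨rfl, rfl⟩
      · exact Or.inr (Or.inl (Reachable.refl _))
      · exact Or.inr (Or.inr (Reachable.refl _))
    · have hadj : (fromEdgeSet A).Adj a c := (fromEdgeSet_adj _).mpr ⟨he, hne⟩
      rcases ih with h' | h' | h'
      · exact Or.inl (hadj.reachable.trans h')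
      · exact Or.inr (Or.inl (hadj.reachable.trans h'))
      · exact Or.inr (Or.inr (hadj.reachable.trans h'))

private lemma b0_mono_aux [Fintype V] (A B : Set (Sym2 V)) (h : A ⊆ B) :
    Nat.card (fromEdgeSet B).ConnectedComponent ≤
      Nat.card (fromEdgeSet A).ConnectedComponent := by
  have hle := fromEdgeSet_mono h
  have hsurj : Function.Surjective
      (ConnectedComponent.map (Hom.ofLE hle)) := by
    intro C
    refine C.ind fun w => ⟨(fromEdgeSet A).connectedComponentMk w, ?_⟩
    simp [ConnectedComponent.map_mk, Hom.ofLE_apply]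
  exact Nat.card_le_card_of_surjective _ hsurj

private lemma b0_insert_aux [Fintype V] (A : Set (Sym2 V)) (u v : V) :
    Nat.card (fromEdgeSet A).ConnectedComponent ≤
      Nat.card (fromEdgeSet (insert s(u,v) A)).ConnectedComponent + 1 := by
  classical
  set G1 := fromEdgeSet A
  set G2 := fromEdgeSet (insert s(u,v) A)
  have hle : G1 ≤ G2 := fromEdgeSet_mono (Set.subset_insert _ _)
  let φ : G1.ConnectedComponent → G2.ConnectedComponent :=
    ConnectedComponent.map (Hom.ofLE hle)
  have hφ : ∀ a : V, φ (G1.connectedComponentMk a) = G2.connectedComponentMk a := by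
    intro a; simp [φ, ConnectedComponent.map_mk, Hom.ofLE_apply]
  have key : ∀ a b : V, G2.Reachable a b →
      G1.connectedComponentMk a = G1.connectedComponentMk b ∨
      G1.connectedComponentMk a = G1.connectedComponentMk u ∨
      G1.connectedComponentMk a = G1.connectedComponentMk v := by
    intro a b ⟨p⟩
    rcases reach_aux A u v p with h | h | h
    · exact Or.inl (ConnectedComponent.sound h)
    · exact Or.inr (Or.inl (ConnectedComponent.sound h))
    · exact Or.inr (Or.inr (ConnectedComponent.sound h))
  let f : G1.ConnectedComponent → G2.ConnectedComponent ⊕ Unit := fun C =>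
    if C = G1.connectedComponentMk u then Sum.inr () else Sum.inl (φ C)
  have hinj : Function.Injective f := by
    intro C D h
    by_cases hC : C = G1.connectedComponentMk u <;>
      by_cases hD : D = G1.connectedComponentMk u
    · rw [hC, hD]
    · simp [f, hC, hD] at h
    · simp [f, hC, hD] at h
    · simp only [f, if_neg hC, if_neg hD, Sum.inl.injEq] at h
      revert hC hD h
      refine C.ind fun a => D.ind fun b => fun hC hD h => ?_
      rw [hφ, hφ] at h
      have hr : G2.Reachable a b := (ConnectedComponent.exact h)
      rcases key a b hr with h' | h' | h'
      · exact h'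
      · exact absurd h' hC
      · rcases key b a hr.symm with h'' | h'' | h''
        · exact h''.symm
        · exact absurd h'' hD
        · rw [h', h'']
  have := Nat.card_le_card_of_injective f hinj
  simpa [Nat.card_sum] using this

end Aux

/-- The edge set of `G` as a `Finset`. -/
noncomputable def graphEdges {V : Type*} [Fintype V] (G : SimpleGraph V) : Finset (Sym2 V) :=
  G.edgeSet.toFinite.toFinset

/-- `b0 s` is the number of connected components of the spanning subgraph `[G:s]`
with vertex set `V` and edge set `s`. -/
noncomputable def b0 {V : Type*} [Fintype V] (s : Finset (Sym2 V)) : ℕ :=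
  Nat.card (SimpleGraph.fromEdgeSet (↑s : Set (Sym2 V))).ConnectedComponent

/-- `b1 s = |s| - r(s)` where `r(s) = |V| - b0 s`, i.e. the first Betti number of `[G:s]`. -/
noncomputable def b1 {V : Type*} [Fintype V] (s : Finset (Sym2 V)) : ℕ :=
  s.card + b0 (V := V) s - Fintype.card V

/-- `T̂(G;x,y) = ∑_{s ⊆ E(G)} (-1)^{|s|} (1+x)^{b0(s)} (1+y)^{b1(s)}` in `ℤ[x,y]`,
where `x = X 0`, `y = X 1`. -/
noncomputable def That {V : Type*} [Fintype V] (G : SimpleGraph V) : MvPolynomial (Fin 2) ℤ :=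
  ∑ s ∈ (graphEdges G).powerset,
    (-1 : MvPolynomial (Fin 2) ℤ) ^ s.card * (1 + X 0) ^ b0 s * (1 + X 1) ^ b1 s

private lemma b0_empty {V : Type*} [Fintype V] :
    b0 (V := V) (∅ : Finset (Sym2 V)) = Fintype.card V := by
  have hbij : Function.Bijective ((⊥ : SimpleGraph V).connectedComponentMk) :=
    ⟨fun a b h => SimpleGraph.reachable_bot.mp (SimpleGraph.ConnectedComponent.exact h),
      fun C => C.ind fun v => ⟨v, rfl⟩⟩
  have : Nat.card ((⊥ : SimpleGraph V).ConnectedComponent) = Nat.card V :=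
    (Nat.card_eq_of_bijective _ hbij).symm
  simp only [b0, Finset.coe_empty, SimpleGraph.fromEdgeSet_empty]
  rw [this, Nat.card_eq_fintype_card]

private lemma card_le_b0_add_card {V : Type*} [Fintype V] (s : Finset (Sym2 V)) :
    Fintype.card V ≤ b0 s + s.card := by
  classical
  induction s using Finset.induction_on with
  | empty => simp [b0_empty]
  | @insert e s he ih =>
    induction e using Sym2.ind with
    | _ u v =>
      have h1 : b0 s ≤ b0 (insert s(u,v) s) + 1 := by
        have := b0_insert_aux (V := V) (↑s) u v
        simpa [b0, Finset.coe_insert] using this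
      rw [Finset.card_insert_of_notMem he]
      omega

/-- the complexity `(-b0(s), b1(s))` strictly increases (in the
lexicographic order) when edges are added. -/
theorem complexity_strict_mono {V : Type*} [Fintype V] (G : SimpleGraph V)
    (s t : Finset (Sym2 V)) (hst : s ⊂ t) (ht : t ⊆ graphEdges G) :
    b0 t < b0 s ∨ (b0 t = b0 s ∧ b1 s < b1 t) := by
  have hb0 : b0 t ≤ b0 s := b0_mono_aux _ _ (Finset.coe_subset.mpr hst.subset)
  rcases lt_or_eq_of_le hb0 with h | h
  · exact Or.inl h
  · refine Or.inr ⟨h, ?_⟩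
    have hcard : s.card < t.card := Finset.card_lt_card hst
    have h1 := card_le_b0_add_card s
    simp only [b1]
    omega
end

section
/- Let G be a simple graph on a finite vertex type V with edge set E = E(G), and define T̃(G;u,v) = ∑_{s ⊆ E} (-1)^{|s|} u^{b0(s)} v^{b1(s)} in ℤ[u,v]. Then the coefficient of the monomial u^{b0(E)} v^{b1(E)} in T̃(G;u,v) equals (-1)^{|E|} (this monomial arises only from the state s = E, the term of maximal complexity; in particular b0(E), and hence the rank r(E) = |V| - b0(E), can be recovered from T̃(G;u,v)). -/
open MvPolynomial

/-- `T̃(G;u,v) = ∑_{s ⊆ E(G)} (-1)^{|s|} u^{b0(s)} v^{b1(s)}` in `ℤ[u,v]`,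
where `u = X 0`, `v = X 1`. -/
noncomputable def Ttilde {V : Type*} [Fintype V] (G : SimpleGraph V) : MvPolynomial (Fin 2) ℤ :=
  ∑ s ∈ (graphEdges G).powerset,
    (-1 : MvPolynomial (Fin 2) ℤ) ^ s.card * (X 0) ^ b0 s * (X 1) ^ b1 s

/-! Among the subsets `s ⊆ E`, the pair `(b0 s, b1 s)` determines `s`. Adding an edge lowers the
number of components by at most one, so `|V| ≤ |s| + b0 s`; hence the truncated subtraction in
`b1` never truncates and `b1 s + |V| = |s| + b0 s`. So `b0 s = b0 E` and `b1 s = b1 E` force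
`|s| = |E|`, i.e. `s = E`, and only the state `E` contributes to the monomial. -/

namespace SimpleGraph

variable {V : Type*}

lemma Reachable.of_sup_edge {G : SimpleGraph V} {a b u w : V}
    (h : (G ⊔ edge a b).Reachable u w) :
    G.Reachable u w ∨ (G.Reachable u a ∧ G.Reachable b w) ∨
      (G.Reachable u b ∧ G.Reachable a w) := by
  obtain ⟨p⟩ := h
  induction p with
  | nil => exact .inl .rfl
  | @cons u x w hadj _ ih =>
    rcases hadj with hadj | hadj
    · rcases ih with hxw | ⟨hxa, hbw⟩ | ⟨hxb, haw⟩
      · exact .inl (hadj.reachable.trans hxw)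
      · exact .inr (.inl ⟨hadj.reachable.trans hxa, hbw⟩)
      · exact .inr (.inr ⟨hadj.reachable.trans hxb, haw⟩)
    · obtain ⟨⟨rfl, rfl⟩ | ⟨rfl, rfl⟩, -⟩ := (edge_adj ..).1 hadj
      · rcases ih with hxw | ⟨hxa, hxw⟩ | ⟨-, huw⟩
        · exact .inr (.inl ⟨.rfl, hxw⟩)
        · exact .inl (hxa.symm.trans hxw)
        · exact .inl huw
      · rcases ih with hxw | ⟨-, huw⟩ | ⟨hxb, hxw⟩
        · exact .inr (.inr ⟨.rfl, hxw⟩)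
        · exact .inl huw
        · exact .inl (hxb.symm.trans hxw)

/-- The induced map on components is injective away from the component of `b`. -/
lemma card_connectedComponent_le_card_sup_edge_add_one [Finite V] (G : SimpleGraph V) (a b : V) :
    Nat.card G.ConnectedComponent ≤ Nat.card (G ⊔ edge a b).ConnectedComponent + 1 := by
  classical
  let f := ConnectedComponent.map (Hom.ofLE (le_sup_left : G ≤ G ⊔ edge a b))
  let F : G.ConnectedComponent → Option (G ⊔ edge a b).ConnectedComponent := fun c =>
    if c = G.connectedComponentMk b then none else some (f c)
  have hF : Function.Injective F := by
    intro c d hcd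
    induction c using ConnectedComponent.ind with | h u => ?_
    induction d using ConnectedComponent.ind with | h w => ?_
    by_cases hu : G.connectedComponentMk u = G.connectedComponentMk b
    · by_cases hw : G.connectedComponentMk w = G.connectedComponentMk b
      · exact hu.trans hw.symm
      · simp [F, hu, hw] at hcd
    by_cases hw : G.connectedComponentMk w = G.connectedComponentMk b
    · simp [F, hu, hw] at hcd
    simp only [F, f, hu, hw, if_false, Option.some.injEq, ConnectedComponent.map_mk,
      ConnectedComponent.eq] at hcd
    rcases hcd.of_sup_edge with huw | ⟨-, hbw⟩ | ⟨hub, -⟩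
    · exact ConnectedComponent.sound huw
    · exact absurd (ConnectedComponent.sound hbw.symm) hw
    · exact absurd (ConnectedComponent.sound hub) hu
  simpa [Finite.card_option] using Nat.card_le_card_of_injective F hF

lemma card_connectedComponent_bot : Nat.card (⊥ : SimpleGraph V).ConnectedComponent = Nat.card V :=
  (Nat.card_eq_of_bijective _
    ⟨fun _ _ h => reachable_bot.1 (ConnectedComponent.eq.1 h), Quot.mk_surjective⟩).symm

lemma card_le_card_add_card_connectedComponent_fromEdgeSet [Finite V] (s : Finset (Sym2 V)) :
    Nat.card V ≤ s.card + Nat.card (fromEdgeSet (s : Set (Sym2 V))).ConnectedComponent := by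
  classical
  induction s using Finset.induction_on with
  | empty => simp [card_connectedComponent_bot]
  | @insert e s he ih =>
    induction e using Sym2.ind with | _ a b =>
    have hsup : fromEdgeSet (↑(insert s(a, b) s) : Set (Sym2 V)) =
        fromEdgeSet (s : Set (Sym2 V)) ⊔ edge a b := by
      rw [Finset.coe_insert, Set.insert_eq, fromEdgeSet_union, edge, sup_comm]
    have := card_connectedComponent_le_card_sup_edge_add_one (fromEdgeSet (s : Set (Sym2 V))) a b
    rw [Finset.card_insert_of_notMem he, hsup]
    omega

end SimpleGraph

lemma b1_add_card {V : Type*} [Fintype V] (s : Finset (Sym2 V)) :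
    b1 s + Fintype.card V = s.card + b0 s := by
  have := SimpleGraph.card_le_card_add_card_connectedComponent_fromEdgeSet s
  rw [Nat.card_eq_fintype_card] at this
  unfold b1 b0
  omega

lemma eq_of_subset_of_b0_eq_of_b1_eq {V : Type*} [Fintype V] {s t : Finset (Sym2 V)}
    (hst : s ⊆ t) (h0 : b0 s = b0 t) (h1 : b1 s = b1 t) : s = t := by
  have hs := b1_add_card s
  have ht := b1_add_card t
  exact Finset.eq_of_subset_of_card_le hst (by omega)

lemma Ttilde_eq_sum_monomial {V : Type*} [Fintype V] (G : SimpleGraph V) :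
    Ttilde G = ∑ s ∈ (graphEdges G).powerset,
      monomial (Finsupp.single 0 (b0 s) + Finsupp.single 1 (b1 s)) ((-1 : ℤ) ^ s.card) := by
  refine Finset.sum_congr rfl fun s _ => ?_
  rw [X_pow_eq_monomial, X_pow_eq_monomial, mul_assoc, monomial_mul, mul_one,
    ← mul_one ((-1 : ℤ) ^ s.card), ← C_mul_monomial]
  simp

/-- the coefficient of the maximal-complexity monomial
`u^{b0(E)} v^{b1(E)}` in `T̃(G;u,v)` equals `(-1)^{|E|}`. -/
theorem Ttilde_coeff_max {V : Type*} [Fintype V] (G : SimpleGraph V) :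
    MvPolynomial.coeff
      (Finsupp.single (0 : Fin 2) (b0 (graphEdges G)) +
        Finsupp.single (1 : Fin 2) (b1 (graphEdges G))) (Ttilde G)
    = (-1) ^ (graphEdges G).card := by
  rw [Ttilde_eq_sum_monomial, coeff_sum,
    Finset.sum_eq_single_of_mem _ (Finset.mem_powerset_self _), coeff_monomial, if_pos rfl]
  intro s hs hne
  rw [coeff_monomial, if_neg]
  intro h
  exact hne <| eq_of_subset_of_b0_eq_of_b1_eq (Finset.mem_powerset.1 hs)
    (by simpa using congrArg (· 0) h) (by simpa using congrArg (· 1) h)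
end

section
/- Let G be a simple graph on a finite vertex type V and let e ∈ E(G) be a bridge (isthmus) of G, i.e., deleting e increases the number of connected components. Then T̂(G - e;x,y) = (1+x) · Ĉ_e(G;x,y), where G - e denotes the graph obtained from G by deleting the edge e. -/
open MvPolynomial

/-- `Ĉ_e(G;x,y) = ∑_{s ⊆ E(G)∖{e}} (-1)^{|s|} (1+x)^{b0(s ∪ {e})} (1+y)^{b1(s ∪ {e})}`;
since `e` is not a loop this equals `T̂(G/e;x,y)`. -/
noncomputable def Chat {V : Type*} [Fintype V] [DecidableEq V] (G : SimpleGraph V) (e : Sym2 V) :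
    MvPolynomial (Fin 2) ℤ :=
  ∑ s ∈ ((graphEdges G).erase e).powerset,
    (-1 : MvPolynomial (Fin 2) ℤ) ^ s.card * (1 + X 0) ^ b0 (insert e s) * (1 + X 1) ^ b1 (insert e s)

section Aux

open SimpleGraph

lemma reach_sup {V : Type*} {H : SimpleGraph V} {u v : V}
    (h : ¬ H.Reachable u v) {a b : V}
    (hr : (H ⊔ SimpleGraph.fromEdgeSet {s(u,v)}).Reachable a b) :
    H.Reachable a b ∨ (H.Reachable a u ∧ H.Reachable v b) ∨
      (H.Reachable a v ∧ H.Reachable u b) := by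
  obtain ⟨p⟩ := hr
  induction p with
  | nil => exact Or.inl (Reachable.refl _)
  | cons hadj p ih =>
    rcases hadj with hH | hE
    · rcases ih with h1 | ⟨h1, h2⟩ | ⟨h1, h2⟩
      · exact Or.inl (hH.reachable.trans h1)
      · exact Or.inr (Or.inl ⟨hH.reachable.trans h1, h2⟩)
      · exact Or.inr (Or.inr ⟨hH.reachable.trans h1, h2⟩)
    · rw [fromEdgeSet_adj, Set.mem_singleton_iff, Sym2.eq_iff] at hE
      obtain ⟨⟨rfl, rfl⟩ | ⟨rfl, rfl⟩, hne⟩ := hE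
      · rcases ih with h1 | ⟨h1, h2⟩ | ⟨h1, h2⟩
        · exact Or.inr (Or.inl ⟨Reachable.refl _, h1⟩)
        · exact absurd h1.symm h
        · exact Or.inl h2
      · rcases ih with h1 | ⟨h1, h2⟩ | ⟨h1, h2⟩
        · exact Or.inr (Or.inr ⟨Reachable.refl _, h1⟩)
        · exact Or.inl h2
        · exact absurd h1 h

lemma card_cc_sup {V : Type*} [Fintype V] {H : SimpleGraph V} {u v : V}
    (h : ¬ H.Reachable u v) :
    Nat.card H.ConnectedComponent
      = Nat.card (H ⊔ SimpleGraph.fromEdgeSet {s(u,v)}).ConnectedComponent + 1 := by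
  classical
  set H' := H ⊔ SimpleGraph.fromEdgeSet {s(u,v)} with hH'
  have huv : u ≠ v := fun huv => h (huv ▸ Reachable.refl u)
  have hle : H ≤ H' := le_sup_left
  set f : {c : H.ConnectedComponent // c ≠ H.connectedComponentMk v} → H'.ConnectedComponent :=
    fun c => c.1.map (SimpleGraph.Hom.ofLE hle) with hf
  have hbij : Function.Bijective f := by
    constructor
    · rintro ⟨c1, h1⟩ ⟨c2, h2⟩ heq
      obtain ⟨a, rfl⟩ := Quot.exists_rep c1
      obtain ⟨b, rfl⟩ := Quot.exists_rep c2
      simp only [hf, ConnectedComponent.map_mk] at heq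
      replace heq : H'.Reachable a b := ConnectedComponent.exact heq
      rcases reach_sup h heq with h1' | ⟨h1', h2'⟩ | ⟨h1', h2'⟩
      · exact Subtype.ext (ConnectedComponent.sound h1')
      · exact absurd (ConnectedComponent.sound h2'.symm) h2
      · exact absurd (ConnectedComponent.sound h1') h1
    · intro c'
      obtain ⟨a, rfl⟩ := Quot.exists_rep c'
      by_cases hav : H.Reachable a v
      · refine ⟨⟨H.connectedComponentMk u, fun hc => h (ConnectedComponent.exact hc)⟩, ?_⟩
        simp only [hf, ConnectedComponent.map_mk]
        have hadj : H'.Adj v u := Or.inr ⟨by simp [Sym2.eq_swap], huv.symm⟩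
        exact ConnectedComponent.sound (hadj.symm.reachable.trans (hav.mono hle).symm)
      · exact ⟨⟨H.connectedComponentMk a, fun hc => hav (ConnectedComponent.exact hc)⟩,
          by rfl⟩
  have h1 : Nat.card {c : H.ConnectedComponent // c ≠ H.connectedComponentMk v}
      = Nat.card H'.ConnectedComponent := Nat.card_eq_of_bijective f hbij
  have e2 : ({c : H.ConnectedComponent // c = H.connectedComponentMk v} ⊕
      {c : H.ConnectedComponent // c ≠ H.connectedComponentMk v}) ≃ H.ConnectedComponent :=
    Equiv.sumCompl _
  haveI : Unique {c : H.ConnectedComponent // c = H.connectedComponentMk v} :=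
    ⟨⟨⟨_, rfl⟩⟩, by rintro ⟨a, rfl⟩; rfl⟩
  have := Nat.card_eq_of_bijective _ e2.bijective
  rw [Nat.card_sum, Nat.card_unique, h1] at this
  omega

end Aux

/-- if `e` is a bridge then `T̂(G-e) = (1+x) Ĉ_e(G)`. -/
theorem That_delete_bridge {V : Type*} [Fintype V] [DecidableEq V] (G : SimpleGraph V)
    (e : Sym2 V) (he : G.IsBridge e) :
    That (G.deleteEdges {e}) = (1 + X 0) * Chat G e := by
  classical
  induction e using Sym2.ind with
  | _ u v =>
  rw [SimpleGraph.isBridge_iff] at he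
  have hE : graphEdges (G.deleteEdges {s(u,v)}) = (graphEdges G).erase s(u,v) := by
    ext a
    simp only [graphEdges, Set.Finite.mem_toFinset, SimpleGraph.edgeSet_deleteEdges,
      Finset.mem_erase, Set.mem_diff, Set.mem_singleton_iff]
    tauto
  rw [That, hE, Chat, Finset.mul_sum]
  refine Finset.sum_congr rfl fun s hs => ?_
  rw [Finset.mem_powerset] at hs
  have hes : s(u,v) ∉ s := fun h' => (Finset.mem_erase.mp (hs h')).1 rfl
  have hsub : (↑s : Set (Sym2 V)) ⊆ (G.deleteEdges {s(u,v)}).edgeSet := by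
    intro a ha
    rw [SimpleGraph.edgeSet_deleteEdges]
    obtain ⟨hne, hmem⟩ := Finset.mem_erase.mp (hs ha)
    exact ⟨(Set.Finite.mem_toFinset _).mp hmem, by simpa using hne⟩
  have hle : SimpleGraph.fromEdgeSet (↑s : Set (Sym2 V)) ≤ G.deleteEdges {s(u,v)} := by
    calc SimpleGraph.fromEdgeSet (↑s : Set (Sym2 V))
        ≤ SimpleGraph.fromEdgeSet (G.deleteEdges {s(u,v)}).edgeSet :=
          SimpleGraph.fromEdgeSet_mono hsub
      _ = G.deleteEdges {s(u,v)} := SimpleGraph.fromEdgeSet_edgeSet _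
  have hnr : ¬ (SimpleGraph.fromEdgeSet (↑s : Set (Sym2 V))).Reachable u v :=
    fun hr => he (hr.mono hle)
  have hkey : b0 s = b0 (insert s(u,v) s) + 1 := by
    have hsup : SimpleGraph.fromEdgeSet (↑(insert s(u,v) s) : Set (Sym2 V))
        = SimpleGraph.fromEdgeSet (↑s : Set (Sym2 V)) ⊔ SimpleGraph.fromEdgeSet {s(u,v)} := by
      rw [Finset.coe_insert, Set.insert_eq, SimpleGraph.fromEdgeSet_union, sup_comm]
    rw [b0, b0, hsup]
    exact card_cc_sup hnr
  have hcard : (insert s(u,v) s).card = s.card + 1 := Finset.card_insert_of_notMem hes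
  have hb1 : b1 s = b1 (insert s(u,v) s) := by
    rw [b1, b1, hcard, hkey]
    omega
  rw [hkey, hb1, pow_succ]
  ring
end

section
/- Let G be a simple graph on a finite vertex type V and let v ∈ V be a pendant vertex, i.e., a vertex of degree one. Then T̂(G;x,y) = x · T̂(G';x,y), where G' is the induced subgraph of G on the vertex set V ∖ {v} (equivalently, G' is the contraction G/e along the pendant edge e at v). -/
open MvPolynomial

/-!
Split the subsets `s ⊆ E(G)` according to whether they contain the pendant edge `e = vu`; those
avoiding `e` are exactly the images of the subsets `t ⊆ E(G - v)`. In the spanning graph of `t` on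
`V` the vertex `v` is isolated, so `b0` exceeds that of `t` on `V - v` by one while `|t|` and `b1`
agree; adding `e` only hangs `v` off `u`, so `b0` and `b1` are again those of `t` and just the sign
flips. Each `t` thus contributes `(1 + x) - 1 = x` times its own term.
-/

theorem Finset.powerset_map {α β : Type*} (f : α ↪ β) (s : Finset α) :
    (s.map f).powerset = s.powerset.map (Finset.mapEmbedding f).toEmbedding := by
  ext t
  simp only [Finset.mem_powerset, Finset.subset_map_iff, Finset.mem_map, eq_comm]
  rfl

namespace SimpleGraph

variable {V : Type*}

theorem card_connectedComponent_eq_of_fibers {β : Type*} {G : SimpleGraph V} (f : V → β)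
    (hadj : ∀ x y, G.Adj x y → f x = f y) (hsurj : Function.Surjective f)
    (hreach : ∀ x y, f x = f y → G.Reachable x y) :
    Nat.card G.ConnectedComponent = Nat.card β := by
  have hwalk : ∀ x y (p : G.Walk x y), f x = f y := by
    intro x y p
    induction p with
    | nil => rfl
    | cons h _ ih => exact (hadj _ _ h).trans ih
  refine Nat.card_eq_of_bijective (ConnectedComponent.lift f fun x y p _ => hwalk x y p)
    ⟨fun C D => ?_, fun b => ?_⟩
  · induction C using ConnectedComponent.ind
    induction D using ConnectedComponent.ind
    exact fun h => ConnectedComponent.sound (hreach _ _ h)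
  · obtain ⟨x, rfl⟩ := hsurj b
    exact ⟨G.connectedComponentMk x, rfl⟩

theorem fromEdgeSet_image_sym2Map {W : Type*} (f : V ↪ W) (s : Set (Sym2 V)) :
    fromEdgeSet (f.sym2Map '' s) = (fromEdgeSet s).map f := by
  ext x y
  simp only [fromEdgeSet_adj, map_adj, Set.mem_image, Sym2.exists,
    Function.Embedding.sym2Map_apply, Sym2.map_mk, Sym2.eq_iff]
  constructor
  · rintro ⟨⟨a, b, hab, (⟨rfl, rfl⟩ | ⟨rfl, rfl⟩)⟩, hne⟩
    · exact ⟨a, b, ⟨hab, fun h => hne (h ▸ rfl)⟩, rfl, rfl⟩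
    · exact ⟨b, a, ⟨Sym2.eq_swap ▸ hab, fun h => hne (h ▸ rfl)⟩, rfl, rfl⟩
  · rintro ⟨a, b, ⟨hab, hne⟩, rfl, rfl⟩
    exact ⟨⟨a, b, hab, .inl ⟨rfl, rfl⟩⟩, f.injective.ne hne⟩

variable {v : V} (K : SimpleGraph ({v}ᶜ : Set V))

theorem card_connectedComponent_map_subtype_compl_singleton [Finite V] :
    Nat.card (K.map (Function.Embedding.subtype (· ∈ ({v}ᶜ : Set V)))).ConnectedComponent =
      Nat.card K.ConnectedComponent + 1 := by
  classical
  let f : V → Option K.ConnectedComponent := fun x =>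
    if h : x = v then none else some (K.connectedComponentMk ⟨x, h⟩)
  have hfv : f v = none := dif_pos rfl
  have hf_of_ne {x : V} (hx : x ≠ v) : f x = some (K.connectedComponentMk ⟨x, hx⟩) := dif_neg hx
  rw [← Finite.card_option]
  refine card_connectedComponent_eq_of_fibers f ?_ ?_ ?_
  · intro _ _ hxy
    obtain ⟨⟨a, ha⟩, ⟨b, hb⟩, hab, rfl, rfl⟩ := (map_adj _ _ _ _).1 hxy
    exact (hf_of_ne ha).trans <| (congrArg some
      (ConnectedComponent.connectedComponentMk_eq_of_adj hab)).trans (hf_of_ne hb).symm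
  · rintro (_ | C)
    · exact ⟨v, hfv⟩
    · induction C using ConnectedComponent.ind with | h a =>
      exact ⟨a, hf_of_ne a.2⟩
  · intro x y hxy
    by_cases hx : x = v <;> by_cases hy : y = v
    · rw [hx, hy]
    · simp [hx, hy, hfv, hf_of_ne] at hxy
    · simp [hx, hy, hfv, hf_of_ne] at hxy
    · rw [hf_of_ne hx, hf_of_ne hy, Option.some.injEq, ConnectedComponent.eq] at hxy
      exact hxy.map (Embedding.map _ K).toHom

theorem card_connectedComponent_map_subtype_sup_edge (u : ({v}ᶜ : Set V)) :
    Nat.card (K.map (Function.Embedding.subtype (· ∈ ({v}ᶜ : Set V))) ⊔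
      edge v u).ConnectedComponent = Nat.card K.ConnectedComponent := by
  classical
  set H := K.map (Function.Embedding.subtype (· ∈ ({v}ᶜ : Set V))) ⊔ edge v u
  let ρ : V → ({v}ᶜ : Set V) := fun x => if h : x = v then u else ⟨x, h⟩
  have hρ_of_ne {x : V} (hx : x ≠ v) : ρ x = ⟨x, hx⟩ := dif_neg hx
  have hu : (u : V) ≠ v := u.2
  have hρv : ρ v = u := dif_pos rfl
  have hρu : ρ u = u := hρ_of_ne hu
  have hvu : H.Adj v u := Or.inr ((edge_adj ..).2 ⟨.inl ⟨rfl, rfl⟩, hu.symm⟩)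
  have hρ_reach (x : V) : H.Reachable x (ρ x) := by
    by_cases hx : x = v
    · rw [hx, hρv]
      exact hvu.reachable
    · rw [hρ_of_ne hx]
  refine card_connectedComponent_eq_of_fibers (fun x => K.connectedComponentMk (ρ x)) ?_ ?_ ?_
  · rintro x y (hxy | hxy)
    · obtain ⟨⟨a, ha⟩, ⟨b, hb⟩, hab, rfl, rfl⟩ := (map_adj _ _ _ _).1 hxy
      simp only [Function.Embedding.subtype_apply, hρ_of_ne ha, hρ_of_ne hb]
      exact ConnectedComponent.connectedComponentMk_eq_of_adj hab
    · rcases (edge_adj ..).1 hxy with ⟨⟨rfl, rfl⟩ | ⟨rfl, rfl⟩, -⟩ <;> simp only [hρv, hρu]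
  · intro C
    induction C using ConnectedComponent.ind with | h a =>
    exact ⟨a, congrArg K.connectedComponentMk (hρ_of_ne a.2)⟩
  · intro x y hxy
    have hK := ConnectedComponent.eq.1 hxy
    exact (hρ_reach x).trans <| (hK.map ((Hom.ofLE le_sup_left).comp
      (Embedding.map _ K).toHom)).trans (hρ_reach y).symm

end SimpleGraph

noncomputable def thatSummand {V : Type*} [Fintype V] (s : Finset (Sym2 V)) :
    MvPolynomial (Fin 2) ℤ :=
  (-1) ^ s.card * (1 + X 0) ^ b0 s * (1 + X 1) ^ b1 s

section Pendant

open SimpleGraph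

variable {V : Type*} {v : V}

theorem mk_notMem_map_subtype (u : V) (s : Finset (Sym2 ({v}ᶜ : Set V))) :
    s(v, u) ∉ s.map (Function.Embedding.subtype (· ∈ ({v}ᶜ : Set V))).sym2Map := by
  intro h
  obtain ⟨e, -, he⟩ := Finset.mem_map.1 h
  obtain ⟨a, -, ha⟩ := Sym2.mem_map.1 (he ▸ Sym2.mem_mk_left v u)
  exact a.2 ha

variable [Fintype V] [DecidableEq V]

theorem card_compl_singleton_add_one : Fintype.card ({v}ᶜ : Set V) + 1 = Fintype.card V := by
  rw [Fintype.card_compl_set, Set.card_singleton]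
  have := Fintype.card_pos_iff.2 ⟨v⟩
  omega

theorem graphEdges_eq_edgeFinset {W : Type*} [Fintype W] (H : SimpleGraph W)
    [Fintype H.edgeSet] : graphEdges H = H.edgeFinset := by
  ext
  simp [graphEdges]

theorem graphEdges_eq_insert_map_induce {G : SimpleGraph V} [DecidableRel G.Adj] {u : V}
    (hG : ∀ w, G.Adj v w ↔ w = u) :
    graphEdges G = insert s(v, u) ((graphEdges (G.induce ({v}ᶜ : Set V))).map
      (Function.Embedding.subtype (· ∈ ({v}ᶜ : Set V))).sym2Map) := by
  rw [graphEdges_eq_edgeFinset, graphEdges_eq_edgeFinset, map_edgeFinset_induce]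
  ext e
  induction e using Sym2.ind with | _ x y
  have hG' (w : V) : G.Adj w v ↔ w = u := (G.adj_comm w v).trans (hG w)
  have huv : u ≠ v := ((hG u).2 rfl).ne'
  by_cases hx : x = v <;> by_cases hy : y = v <;> simp [hx, hy, hG, hG', huv.symm]

theorem b0_map_subtype (s : Finset (Sym2 ({v}ᶜ : Set V))) :
    b0 (s.map (Function.Embedding.subtype (· ∈ ({v}ᶜ : Set V))).sym2Map) = b0 s + 1 := by
  rw [b0, Finset.coe_map, fromEdgeSet_image_sym2Map,
    card_connectedComponent_map_subtype_compl_singleton]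
  rfl

theorem b0_insert_map_subtype (u : ({v}ᶜ : Set V)) (s : Finset (Sym2 ({v}ᶜ : Set V))) :
    b0 (insert s(v, ↑u) (s.map (Function.Embedding.subtype (· ∈ ({v}ᶜ : Set V))).sym2Map)) =
      b0 s := by
  rw [b0, Finset.coe_insert, Set.insert_eq, fromEdgeSet_union, Finset.coe_map,
    fromEdgeSet_image_sym2Map, sup_comm]
  exact card_connectedComponent_map_subtype_sup_edge _ u

theorem thatSummand_map_subtype (s : Finset (Sym2 ({v}ᶜ : Set V))) :
    thatSummand (s.map (Function.Embedding.subtype (· ∈ ({v}ᶜ : Set V))).sym2Map) =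
      (1 + X 0) * thatSummand s := by
  have hb1 : b1 (s.map (Function.Embedding.subtype (· ∈ ({v}ᶜ : Set V))).sym2Map) = b1 s := by
    have := card_compl_singleton_add_one (v := v)
    rw [b1, b1, Finset.card_map, b0_map_subtype]
    omega
  rw [thatSummand, thatSummand, Finset.card_map, b0_map_subtype, hb1]
  ring

theorem thatSummand_insert_map_subtype (u : ({v}ᶜ : Set V))
    (s : Finset (Sym2 ({v}ᶜ : Set V))) :
    thatSummand (insert s(v, ↑u)
      (s.map (Function.Embedding.subtype (· ∈ ({v}ᶜ : Set V))).sym2Map)) = -thatSummand s := by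
  have hcard : (insert s(v, ↑u)
      (s.map (Function.Embedding.subtype (· ∈ ({v}ᶜ : Set V))).sym2Map)).card = s.card + 1 := by
    rw [Finset.card_insert_of_notMem (mk_notMem_map_subtype _ s), Finset.card_map]
  have hb1 : b1 (insert s(v, ↑u)
      (s.map (Function.Embedding.subtype (· ∈ ({v}ᶜ : Set V))).sym2Map)) = b1 s := by
    have := card_compl_singleton_add_one (v := v)
    rw [b1, b1, hcard, b0_insert_map_subtype]
    omega
  rw [thatSummand, thatSummand, hcard, b0_insert_map_subtype, hb1]
  ring

end Pendant

/-- if `v` is a pendant vertex (degree one) of `G`, then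
`T̂(G;x,y) = x · T̂(G';x,y)` where `G'` is the induced subgraph on `V ∖ {v}`. -/
theorem That_pendant {V : Type*} [Fintype V] [DecidableEq V] (G : SimpleGraph V)
    [DecidableRel G.Adj] (v : V) (hv : G.degree v = 1) :
    That G = X 0 * That (G.induce ({v}ᶜ : Set V)) := by
  obtain ⟨u, hu⟩ := Finset.card_eq_one.1 hv
  have hG (w : V) : G.Adj v w ↔ w = u := by
    rw [← SimpleGraph.mem_neighborFinset, hu, Finset.mem_singleton]
  have huv : u ∈ ({v}ᶜ : Set V) := ((hG u).2 rfl).ne'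
  show ∑ s ∈ _, thatSummand s = X 0 * ∑ s ∈ _, thatSummand s
  rw [graphEdges_eq_insert_map_induce hG, Finset.sum_powerset_insert (mk_notMem_map_subtype u _),
    Finset.powerset_map, Finset.sum_map, Finset.sum_map, Finset.mul_sum,
    ← Finset.sum_add_distrib]
  refine Finset.sum_congr rfl fun t _ => ?_
  simp only [RelEmbedding.coe_toEmbedding, Finset.mapEmbedding_apply, thatSummand_map_subtype,
    thatSummand_insert_map_subtype (⟨u, huv⟩ : ({v}ᶜ : Set V))]
  ring
end

section
/- Let G be a simple graph on a finite vertex type V that is a tree (connected and acyclic) with n = |E(G)| edges. Then T̂(G;x,y) = x^n + x^{n+1} = x^n(1+x) in ℤ[x,y]. -/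
open MvPolynomial

section Aux
open SimpleGraph

lemma acyclic_mono {V : Type*} {H G : SimpleGraph V} (h : H ≤ G) (hG : G.IsAcyclic) :
    H.IsAcyclic := fun _ c hc => hG (c.mapLe h) (hc.mapLe h)

lemma reach_cases {V : Type*} {H : SimpleGraph V} {u v : V} (huv : H.Adj u v) {a b : V}
    (hr : H.Reachable a b) :
    (H \ fromEdgeSet {s(u, v)}).Reachable a b ∨
      ((H \ fromEdgeSet {s(u, v)}).Reachable a u ∧ (H \ fromEdgeSet {s(u, v)}).Reachable v b) ∨
      ((H \ fromEdgeSet {s(u, v)}).Reachable a v ∧ (H \ fromEdgeSet {s(u, v)}).Reachable u b) := by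
  set H' := H \ fromEdgeSet {s(u, v)} with hH'
  obtain ⟨p⟩ := hr
  induction p with
  | nil => exact Or.inl (Reachable.refl _)
  | @cons a c b hac p ih =>
    by_cases he : s(a, c) = s(u, v)
    · rw [Sym2.eq_iff] at he
      rcases he with ⟨rfl, rfl⟩ | ⟨rfl, rfl⟩
      · rcases ih with h1 | ⟨h1, h2⟩ | ⟨h1, h2⟩
        · exact Or.inr (Or.inl ⟨Reachable.refl _, h1⟩)
        · exact Or.inl (h1.symm.trans h2)
        · exact Or.inl h2
      · rcases ih with h1 | ⟨h1, h2⟩ | ⟨h1, h2⟩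
        · exact Or.inr (Or.inr ⟨Reachable.refl _, h1⟩)
        · exact Or.inl h2
        · exact Or.inl (h1.symm.trans h2)
    · have hac' : H'.Adj a c := by
        rw [hH']
        simp only [sdiff_adj, fromEdgeSet_adj]
        exact ⟨hac, fun h' => he h'.1⟩
      rcases ih with h1 | ⟨h1, h2⟩ | ⟨h1, h2⟩
      · exact Or.inl (hac'.reachable.trans h1)
      · exact Or.inr (Or.inl ⟨hac'.reachable.trans h1, h2⟩)
      · exact Or.inr (Or.inr ⟨hac'.reachable.trans h1, h2⟩)

lemma card_comp_delete {V : Type*} [Finite V] {H : SimpleGraph V} {u v : V} (huv : H.Adj u v)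
    (hb : ¬(H \ fromEdgeSet {s(u, v)}).Reachable u v) :
    Nat.card (H \ fromEdgeSet {s(u, v)}).ConnectedComponent =
      Nat.card H.ConnectedComponent + 1 := by
  set H' := H \ fromEdgeSet {s(u, v)} with hH'
  have hle : H' ≤ H := sdiff_le
  set cv : H'.ConnectedComponent := H'.connectedComponentMk v with hcv
  set ψ : {c : H'.ConnectedComponent // c ≠ cv} → H.ConnectedComponent :=
    fun c => c.1.map (Hom.ofLE hle) with hψ
  have hmk : ∀ a : V, (H'.connectedComponentMk a).map (Hom.ofLE hle) =
      H.connectedComponentMk a := fun a => rfl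
  have hbij : Function.Bijective ψ := by
    constructor
    · rintro ⟨c₁, h₁⟩ ⟨c₂, h₂⟩ h
      obtain ⟨a, rfl⟩ := c₁.exists_rep
      obtain ⟨b, rfl⟩ := c₂.exists_rep
      simp only [hψ, hmk] at h
      have hr : H.Reachable a b := ConnectedComponent.exact h
      rcases reach_cases huv hr with h1 | ⟨h1, h2⟩ | ⟨h1, h2⟩
      · exact Subtype.ext (ConnectedComponent.sound h1)
      · exact absurd (ConnectedComponent.sound h2.symm) h₂
      · exact absurd (ConnectedComponent.sound h1) h₁
    · intro c
      obtain ⟨a, rfl⟩ := c.exists_rep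
      by_cases ha : H'.connectedComponentMk a = cv
      · have hune : H'.connectedComponentMk u ≠ cv := fun h => hb (ConnectedComponent.exact h)
        refine ⟨⟨_, hune⟩, ?_⟩
        simp only [hψ, hmk]
        exact ConnectedComponent.sound
          (huv.reachable.trans ((ConnectedComponent.exact ha).mono hle).symm)
      · exact ⟨⟨_, ha⟩, rfl⟩
  have h1 := Nat.card_eq_of_bijective ψ hbij
  have h2 : Nat.card H'.ConnectedComponent =
      Nat.card {c : H'.ConnectedComponent // c ≠ cv} + 1 := by
    classical
    rw [Nat.card_congr (Equiv.optionSubtypeNe cv).symm, Finite.card_option]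
  omega

lemma card_comp_bot {V : Type*} : Nat.card (⊥ : SimpleGraph V).ConnectedComponent = Nat.card V :=
  Nat.card_congr ⟨ConnectedComponent.lift id fun _ _ p _ => (reachable_bot.mp ⟨p⟩),
    (⊥ : SimpleGraph V).connectedComponentMk, fun c => c.ind fun _ => rfl, fun _ => rfl⟩

lemma forest_card {V : Type*} [Fintype V] (H : SimpleGraph V) (hH : H.IsAcyclic) :
    Nat.card H.ConnectedComponent + Nat.card H.edgeSet = Fintype.card V := by
  generalize hn : Nat.card H.edgeSet = n
  induction n generalizing H with
  | zero =>
    have hfin : H.edgeSet.Finite := Set.toFinite _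
    have : H.edgeSet = ∅ := by
      rw [← Set.isEmpty_coe_sort]
      rwa [Nat.card_eq_zero, or_iff_left (not_infinite_iff_finite.mpr hfin.to_subtype)] at hn
    rw [edgeSet_eq_empty.mp this, ← Nat.card_eq_fintype_card, card_comp_bot, add_zero]
  | succ n ih =>
    have hfin : H.edgeSet.Finite := Set.toFinite _
    have hne : H.edgeSet.Nonempty := by
      rw [Set.nonempty_iff_ne_empty]
      rintro h
      rw [h] at hn; simp at hn
    obtain ⟨e, he⟩ := hne
    induction e with
    | h u v =>
    have huv : H.Adj u v := he
    have hb : ¬(H \ fromEdgeSet {s(u, v)}).Reachable u v :=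
      ((isAcyclic_iff_forall_adj_isBridge.mp hH) huv)
    set H' := H \ fromEdgeSet {s(u, v)} with hH'
    have hE : H'.edgeSet = H.edgeSet \ {s(u, v)} := by
      simp [hH', edgeSet_sdiff, edgeSet_fromEdgeSet, edgeSet_sdiff_sdiff_isDiag]
    have hcard : Nat.card H'.edgeSet = n := by
      rw [hE, Nat.card_coe_set_eq, Set.ncard_diff_singleton_of_mem he]
      have := hn
      rw [Nat.card_coe_set_eq] at this
      omega
    have := ih H' (acyclic_mono sdiff_le hH) hcard
    rw [card_comp_delete huv hb] at this
    omega

end Aux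

open Finset SimpleGraph in
/-- for a tree with `n` edges, `T̂(G;x,y) = x^n + x^{n+1}`. -/
theorem That_tree {V : Type*} [Fintype V] (G : SimpleGraph V) (hG : G.IsTree) :
    That G = X 0 ^ (graphEdges G).card + X 0 ^ ((graphEdges G).card + 1) := by
  classical
  set n := (graphEdges G).card with hn
  have hcoe : (↑(graphEdges G) : Set (Sym2 V)) = G.edgeSet :=
    G.edgeSet.toFinite.coe_toFinset
  have hVcard : Fintype.card V = n + 1 := by
    have : Fintype G.edgeSet := G.edgeSet.toFinite.fintype
    have h := hG.card_edgeFinset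
    have h2 : G.edgeFinset = graphEdges G := by
      ext e; rw [mem_edgeFinset, graphEdges, Set.Finite.mem_toFinset]
    rw [h2] at h
    omega
  -- per subset values
  have hb0 : ∀ s ∈ (graphEdges G).powerset, b0 (V := V) s = n + 1 - s.card := by
    intro s hs
    rw [mem_powerset] at hs
    have hsub : (↑s : Set (Sym2 V)) ⊆ G.edgeSet := by
      rw [← hcoe]; exact_mod_cast hs
    have hle : fromEdgeSet (↑s : Set (Sym2 V)) ≤ G := by
      calc fromEdgeSet (↑s : Set (Sym2 V)) ≤ fromEdgeSet G.edgeSet := fromEdgeSet_mono hsub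
        _ = G := G.fromEdgeSet_edgeSet
    have hE : (fromEdgeSet (↑s : Set (Sym2 V))).edgeSet = ↑s := by
      rw [edgeSet_fromEdgeSet]
      ext e
      simp only [Set.mem_diff, Set.mem_setOf_eq, Finset.mem_coe, and_iff_left_iff_imp]
      exact fun he hd => G.not_isDiag_of_mem_edgeSet (hsub he) hd
    have h := forest_card (fromEdgeSet (↑s : Set (Sym2 V))) (acyclic_mono hle hG.IsAcyclic)
    rw [hE, Nat.card_coe_set_eq, Set.ncard_coe_finset] at h
    have hcard : s.card ≤ n := card_le_card hs
    unfold b0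
    omega
  have hb1 : ∀ s ∈ (graphEdges G).powerset, b1 (V := V) s = 0 := by
    intro s hs
    have := hb0 s hs
    have hcard : s.card ≤ n := card_le_card (mem_powerset.mp hs)
    unfold b1
    rw [this, hVcard]
    omega
  rw [That]
  rw [Finset.sum_congr rfl fun s hs => by
    rw [hb0 s hs, hb1 s hs, pow_zero, mul_one]]
  rw [Finset.sum_powerset_apply_card
    (f := fun k => ((-1 : MvPolynomial (Fin 2) ℤ)) ^ k * (1 + X 0) ^ (n + 1 - k))]
  rw [← hn]
  have expand : ((X 0 : MvPolynomial (Fin 2) ℤ)) ^ n =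
      ∑ k ∈ Finset.range (n + 1),
        (1 + X 0) ^ k * (-1) ^ (n - k) * (n.choose k : MvPolynomial (Fin 2) ℤ) := by
    have h := add_pow (1 + X 0 : MvPolynomial (Fin 2) ℤ) (-1) n
    rw [show (1 + X 0 + -1 : MvPolynomial (Fin 2) ℤ) = X 0 by ring] at h
    exact h
  calc ∑ i ∈ Finset.range (n + 1),
        n.choose i • ((-1 : MvPolynomial (Fin 2) ℤ) ^ i * (1 + X 0) ^ (n + 1 - i))
      = ∑ i ∈ Finset.range (n + 1),
        (n.choose i : MvPolynomial (Fin 2) ℤ) * ((-1) ^ i * (1 + X 0) ^ (n + 1 - i)) := by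
        simp [nsmul_eq_mul]
    _ = ∑ j ∈ Finset.range (n + 1), (n.choose (n - j) : MvPolynomial (Fin 2) ℤ) *
        ((-1) ^ (n - j) * (1 + X 0) ^ (n + 1 - (n - j))) := by
        rw [← Finset.sum_range_reflect
          (fun i => (n.choose i : MvPolynomial (Fin 2) ℤ) * ((-1) ^ i * (1 + X 0) ^ (n + 1 - i)))
          (n + 1)]
        simp
    _ = ∑ j ∈ Finset.range (n + 1),
        (1 + X 0) ^ j * (-1) ^ (n - j) * (n.choose j : MvPolynomial (Fin 2) ℤ) * (1 + X 0) := by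
        refine Finset.sum_congr rfl fun j hj => ?_
        rw [Finset.mem_range] at hj
        rw [Nat.choose_symm (by omega), show n + 1 - (n - j) = j + 1 by omega]
        ring
    _ = (X 0) ^ n * (1 + X 0) := by rw [← Finset.sum_mul, ← expand]
    _ = X 0 ^ n + X 0 ^ (n + 1) := by ring
end
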